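/- arXiv:0706.4343 — 2 statements merged into one kernel-verified Lean document; each statement's English description precedes it below -/
import Mathlib

section
/- Let (X; f_0,…,f_{n−1}) be an iterated function system on a compact metric space X such that every f_i is a similarity with the same ratio r ∈ (0,1), let 1 < β < n, and let E_β be the β-attractor. Assume the separation condition f_i(E_β) ∩ f_j(E_β) ∩ E_β = ∅ for i ≠ j, and let l be the nonnegative integer with r^{l+1}|X| < δ_0 ≤ r^l|X|, where δ_0 = min_{i≠j} d(f_i(E_β)∩E_β, f_j(E_β)∩E_β) > 0. Then, with s = log β / (−log r), every finite δ_0-cover {U_1,…,U_N} of E_β satisfies Σ_{i=1}^N |U_i|^s ≥ β^{−2(l+1)}(β−1)|X|^s; in particular the s-dimensional Hausdorff measure of E_β is positive and dim_H(E_β) ≥ s. -/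
/-!
Let `g : [0,1) → E_β` send `x` to the point of `E_β` addressed by the β-expansion of `x`.
Since `g x = f_{a_1(x)} (g (T_β x))` and the maps are similarities of ratio `r`, two points whose
expansions first differ at digit `p` are sent to points at distance at least `r ^ p δ₀`. Hence
the `g`-preimage of a set `U` with `|U| < r ^ i δ₀` for all `i < q` lies in a single cylinder, of
length `β ^ (-q) = (r ^ q) ^ s`, and choosing `q` minimal with `r ^ q δ₀ ≤ |U|` gives
`Leb (g⁻¹ U) ≤ (|U| / δ₀) ^ s`. So `ν = δ₀ ^ s · g_* Leb` satisfies `ν U ≤ |U| ^ s` and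
`ν E_β = δ₀ ^ s`, and the mass distribution principle bounds every cover:
`∑ |U_i| ^ s ≥ δ₀ ^ s > (r ^ (l+1) |X|) ^ s = β ^ (-(l+1)) |X| ^ s`.
-/

open Set Filter MeasureTheory Topology

/-- The β-transformation `T_β x = βx - ⌊βx⌋`. -/
noncomputable def betaT (β x : ℝ) : ℝ := Int.fract (β * x)

/-- The `n`-th digit (0-indexed) of the β-expansion of `x ∈ [0,1)`. -/
noncomputable def betaDigit (β x : ℝ) (n : ℕ) : ℕ := ⌊β * (betaT β)^[n] x⌋₊

/-- The β-shift `Σ_β`. -/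
def betaShift (β : ℝ) : Set (ℕ → ℕ) :=
  closure {d | ∃ x ∈ Set.Ico (0 : ℝ) 1, ∀ n, d n = betaDigit β x n}

/-- Distance between two sets: the infimum of distances between their points. -/
noncomputable def setDist {X : Type*} [MetricSpace X] (A B : Set X) : ℝ :=
  sInf (Set.image2 dist A B)

open scoped ENNReal

section BetaExpansion

variable {β x : ℝ}

lemma betaT_mem_Ico (β x : ℝ) : betaT β x ∈ Ico (0 : ℝ) 1 :=
  ⟨Int.fract_nonneg _, Int.fract_lt_one _⟩

lemma iterate_betaT_mem_Ico (hx : x ∈ Ico (0 : ℝ) 1) (k : ℕ) :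
    (betaT β)^[k] x ∈ Ico (0 : ℝ) 1 := by
  cases k with
  | zero => exact hx
  | succ k => rw [Function.iterate_succ_apply']; exact betaT_mem_Ico _ _

lemma betaDigit_succ (β x : ℝ) (k : ℕ) : betaDigit β x (k + 1) = betaDigit β (betaT β x) k := by
  simp [betaDigit, Function.iterate_succ_apply]

lemma betaDigit_lt {n : ℕ} (hβ : 0 < β) (hβn : β ≤ n) (hx : x ∈ Ico (0 : ℝ) 1) (k : ℕ) :
    betaDigit β x k < n := by
  obtain ⟨h0, h1⟩ := iterate_betaT_mem_Ico (β := β) hx k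
  exact (Nat.floor_lt (by positivity)).2 (by nlinarith)

lemma betaDigit_mem_betaShift (hx : x ∈ Ico (0 : ℝ) 1) : betaDigit β x ∈ betaShift β :=
  subset_closure ⟨x, hx, fun _ => rfl⟩

lemma mul_eq_betaDigit_zero_add_betaT (hβ : 0 ≤ β) (hx : 0 ≤ x) :
    β * x = betaDigit β x 0 + betaT β x := by
  rw [betaDigit, Function.iterate_zero_apply, betaT,
    natCast_floor_eq_intCast_floor (by positivity), Int.floor_add_fract]

lemma abs_sub_le_of_betaDigit_eq (hβ : 0 < β) {j : ℕ} :
    ∀ {x y : ℝ}, x ∈ Ico (0 : ℝ) 1 → y ∈ Ico (0 : ℝ) 1 →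
      (∀ i < j, betaDigit β x i = betaDigit β y i) → |x - y| ≤ β⁻¹ ^ j := by
  induction j with
  | zero =>
    intro x y hx hy _
    rw [pow_zero, abs_le]
    constructor <;> linarith [hx.1, hx.2, hy.1, hy.2]
  | succ j ih =>
    intro x y hx hy hxy
    have hT : β * (x - y) = betaT β x - betaT β y := by
      rw [mul_sub, mul_eq_betaDigit_zero_add_betaT hβ.le hx.1,
        mul_eq_betaDigit_zero_add_betaT hβ.le hy.1, hxy 0 j.succ_pos]
      ring
    have hTj : |betaT β x - betaT β y| ≤ β⁻¹ ^ j :=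
      ih (betaT_mem_Ico β x) (betaT_mem_Ico β y) fun i hi => by
        simpa only [betaDigit_succ] using hxy (i + 1) (Nat.succ_lt_succ hi)
    rw [← hT, abs_mul, abs_of_pos hβ] at hTj
    rw [pow_succ, ← div_eq_mul_inv, le_div_iff₀ hβ, mul_comm]
    exact hTj

lemma volume_le_of_betaDigit_eq (hβ : 0 < β) {A : Set ℝ} (hA : A ⊆ Ico 0 1) {j : ℕ}
    (h : ∀ x ∈ A, ∀ y ∈ A, ∀ i < j, betaDigit β x i = betaDigit β y i) :
    volume A ≤ ENNReal.ofReal (β⁻¹ ^ j) :=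
  (Real.volume_le_diam A).trans <| Metric.ediam_le_of_forall_dist_le fun x hx y hy =>
    abs_sub_le_of_betaDigit_eq hβ (hA hx) (hA hy) (h x hx y hy)

end BetaExpansion

lemma le_ofReal_div_rpow_of_forall_pow {V : ℝ≥0∞} {r d δ s : ℝ} (hr0 : 0 < r) (hr1 : r < 1)
    (hd : 0 ≤ d) (hδ : 0 < δ) (hs : 0 < s)
    (hV : ∀ j : ℕ, (∀ i < j, d < r ^ i * δ) → V ≤ ENNReal.ofReal ((r ^ j) ^ s)) :
    V ≤ ENNReal.ofReal ((d / δ) ^ s) := by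
  rcases hd.eq_or_lt with rfl | hd
  · have hlim : Tendsto (fun j : ℕ => ENNReal.ofReal ((r ^ j) ^ s)) atTop (𝓝 0) := by
      simp_rw [← Real.rpow_pow_comm hr0.le]
      rw [← ENNReal.ofReal_zero]
      exact ENNReal.tendsto_ofReal (tendsto_pow_atTop_nhds_zero_of_lt_one (by positivity)
        (Real.rpow_lt_one hr0.le hr1 hs))
    rw [zero_div, Real.zero_rpow hs.ne', ENNReal.ofReal_zero]
    exact ge_of_tendsto' hlim fun j => hV j fun i _ => by positivity
  · classical
    have hex : ∃ q : ℕ, r ^ q * δ ≤ d := by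
      obtain ⟨q, hq⟩ := exists_pow_lt_of_lt_one (div_pos hd hδ) hr1
      exact ⟨q, ((lt_div_iff₀ hδ).1 hq).le⟩
    refine (hV _ fun i hi => not_le.1 (Nat.find_min hex hi)).trans (ENNReal.ofReal_le_ofReal ?_)
    exact Real.rpow_le_rpow (by positivity) ((le_div_iff₀ hδ).2 (Nat.find_spec hex)) hs.le

lemma Metric.ediam_rpow_eq_ofReal {X : Type*} [PseudoMetricSpace X] {U : Set X}
    (hU : Bornology.IsBounded U) {d : ℝ} (hd : 0 ≤ d) :
    Metric.ediam U ^ d = ENNReal.ofReal (Metric.diam U ^ d) := by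
  rw [← ENNReal.ofReal_rpow_of_nonneg Metric.diam_nonneg hd, Metric.diam,
    ENNReal.ofReal_toReal hU.ediam_ne_top]

lemma le_hausdorffMeasure_of_forall_le_ediam_rpow {X : Type*} [EMetricSpace X]
    [MeasurableSpace X] [BorelSpace X] {ν : OuterMeasure X} {d : ℝ}
    (h : ∀ U, ν U ≤ Metric.ediam U ^ d) (E : Set X) : ν E ≤ μH[d] E := by
  rw [Measure.hausdorffMeasure, ← OuterMeasure.coe_mkMetric]
  exact OuterMeasure.le_mkMetric _ ν 1 one_pos (fun U _ => h U) E

lemma ofReal_le_dimH_of_hausdorffMeasure_ne_zero {X : Type*} [EMetricSpace X]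
    [MeasurableSpace X] [BorelSpace X] {E : Set X} {d : ℝ} (hd : 0 ≤ d) (h : μH[d] E ≠ 0) :
    ENNReal.ofReal d ≤ dimH E :=
  le_dimH_of_hausdorffMeasure_ne_zero (by rwa [Real.coe_toNNReal d hd])

lemma le_sum_diam_rpow_of_forall_le_ediam_rpow {X : Type*} [MetricSpace X] [CompactSpace X]
    {ν : OuterMeasure X} {d c : ℝ} (hd : 0 ≤ d) (h : ∀ U, ν U ≤ Metric.ediam U ^ d) {E : Set X}
    (hE : ENNReal.ofReal c ≤ ν E) {ι : Type*} [Fintype ι] {U : ι → Set X}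
    (hU : E ⊆ ⋃ i, U i) : c ≤ ∑ i, Metric.diam (U i) ^ d := by
  have hsum : ν E ≤ ENNReal.ofReal (∑ i, Metric.diam (U i) ^ d) := by
    rw [ENNReal.ofReal_sum_of_nonneg fun i _ => by positivity]
    refine (measure_mono hU).trans ((measure_iUnion_fintype_le ν U).trans ?_)
    gcongr with i
    rw [← Metric.ediam_rpow_eq_ofReal Metric.isBounded_of_compactSpace hd]
    exact h (U i)
  exact (ENNReal.ofReal_le_ofReal_iff (by positivity)).1 (hE.trans hsum)

lemma rpow_log_div_neg_log {r β : ℝ} (hr0 : 0 < r) (hr1 : r ≠ 1) (hβ : 0 < β) :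
    r ^ (Real.log β / -Real.log r) = β⁻¹ := by
  have hlog : Real.log r ≠ 0 := Real.log_ne_zero_of_pos_of_ne_one hr0 hr1
  rw [Real.rpow_def_of_pos hr0, show Real.log r * (Real.log β / -Real.log r) = -Real.log β by
    field_simp, Real.exp_neg, Real.exp_log hβ]

lemma zpow_neg_two_mul_sub_one_le {β : ℝ} (hβ : 1 < β) (m : ℕ) :
    β ^ (-(2 * ((m : ℤ) + 1))) * (β - 1) ≤ β⁻¹ ^ (m + 1) := by
  have hβ0 : 0 < β := by linarith
  rw [zpow_neg, ← inv_zpow, show 2 * ((m : ℤ) + 1) = ((2 * (m + 1) : ℕ) : ℤ) by push_cast; ring,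
    zpow_natCast, pow_mul']
  have hcancel : β⁻¹ ^ (m + 1) * β ^ (m + 1) = 1 := by
    rw [← mul_pow, inv_mul_cancel₀ hβ0.ne', one_pow]
  calc (β⁻¹ ^ (m + 1)) ^ 2 * (β - 1) ≤ (β⁻¹ ^ (m + 1)) ^ 2 * β ^ (m + 1) := by
        gcongr
        exact (sub_le_self β zero_le_one).trans (le_self_pow₀ hβ.le (Nat.succ_ne_zero m))
    _ = β⁻¹ ^ (m + 1) * (β⁻¹ ^ (m + 1) * β ^ (m + 1)) := by ring
    _ = β⁻¹ ^ (m + 1) := by rw [hcancel, mul_one]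

section AddressMap

variable {X : Type*}

def IsAddressMap [TopologicalSpace X] (f : ℕ → X → X) (S : Set (ℕ → ℕ)) (φ : (ℕ → ℕ) → X) :
    Prop :=
  ∀ σ ∈ S, ∀ x : X,
    Tendsto (fun k => (List.range k).foldr (fun j y => f (σ j) y) x) atTop (𝓝 (φ σ))

lemma foldr_range_succ_eq_apply (f : ℕ → X → X) (σ : ℕ → ℕ) (x : X) (k : ℕ) :
    (List.range (k + 1)).foldr (fun j y => f (σ j) y) x =
      f (σ 0) ((List.range k).foldr (fun j y => f (σ (j + 1)) y) x) := by
  rw [List.range_succ_eq_map, List.foldr_cons, List.foldr_map]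

lemma eq_apply_of_tendsto_foldr [TopologicalSpace X] [T2Space X] {f : ℕ → X → X} {σ : ℕ → ℕ}
    {x a b : X} (hf : Continuous (f (σ 0)))
    (ha : Tendsto (fun k => (List.range k).foldr (fun j y => f (σ j) y) x) atTop (𝓝 a))
    (hb : Tendsto (fun k => (List.range k).foldr (fun j y => f (σ (j + 1)) y) x) atTop (𝓝 b)) :
    a = f (σ 0) b := by
  refine tendsto_nhds_unique ?_ ((hf.tendsto b).comp hb)
  exact (ha.comp (tendsto_add_atTop_nat 1)).congr (foldr_range_succ_eq_apply f σ x)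

end AddressMap

section Coding

variable {X : Type*} [MetricSpace X] {n : ℕ} {f : ℕ → X → X} {β r δ : ℝ}

noncomputable def betaCoding (β : ℝ) (φ : (ℕ → ℕ) → X) (x : ℝ) : X :=
  φ (betaDigit β x)

lemma betaCoding_eq_apply_betaT {φ : (ℕ → ℕ) → X} (hβ : 0 < β) (hβn : β ≤ n)
    (hf : ∀ i < n, Continuous (f i)) (hφ : IsAddressMap f (betaShift β) φ) {x : ℝ}
    (hx : x ∈ Ico (0 : ℝ) 1) :
    betaCoding β φ x = f (betaDigit β x 0) (betaCoding β φ (betaT β x)) := by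
  refine eq_apply_of_tendsto_foldr (hf _ (betaDigit_lt hβ hβn hx 0))
    (hφ _ (betaDigit_mem_betaShift hx) (φ (betaDigit β x))) ?_
  simp only [betaDigit_succ]
  exact hφ _ (betaDigit_mem_betaShift (betaT_mem_Ico β x)) (φ (betaDigit β x))

lemma setDist_le_dist {A B : Set X} {a b : X} (ha : a ∈ A) (hb : b ∈ B) :
    setDist A B ≤ dist a b :=
  csInf_le ⟨0, by rintro _ ⟨_, -, _, -, rfl⟩; exact dist_nonneg⟩ (mem_image2_of_mem ha hb)

variable {g : ℝ → X}

lemma le_dist_of_betaDigit_zero_ne {E : Set X} (hβ : 0 < β) (hβn : β ≤ n)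
    (hstep : ∀ x ∈ Ico (0 : ℝ) 1, g x = f (betaDigit β x 0) (g (betaT β x)))
    (hgE : MapsTo g (Ico 0 1) E)
    (hδ : ∀ i < n, ∀ j < n, i ≠ j → δ ≤ setDist (f i '' E ∩ E) (f j '' E ∩ E))
    {x y : ℝ} (hx : x ∈ Ico (0 : ℝ) 1) (hy : y ∈ Ico (0 : ℝ) 1)
    (hxy : betaDigit β x 0 ≠ betaDigit β y 0) : δ ≤ dist (g x) (g y) := by
  have hpiece : ∀ z ∈ Ico (0 : ℝ) 1, g z ∈ f (betaDigit β z 0) '' E ∩ E := fun z hz =>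
    ⟨⟨_, hgE (betaT_mem_Ico β z), (hstep z hz).symm⟩, hgE hz⟩
  exact (hδ _ (betaDigit_lt hβ hβn hx 0) _ (betaDigit_lt hβ hβn hy 0) hxy).trans
    (setDist_le_dist (hpiece x hx) (hpiece y hy))

section Separated

variable
  (hstep : ∀ x ∈ Ico (0 : ℝ) 1, g x = f (betaDigit β x 0) (g (betaT β x)))
  (hsim : ∀ i < n, ∀ x y : X, dist (f i x) (f i y) = r * dist x y)
  (hsep : ∀ x ∈ Ico (0 : ℝ) 1, ∀ y ∈ Ico (0 : ℝ) 1,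
    betaDigit β x 0 ≠ betaDigit β y 0 → δ ≤ dist (g x) (g y))
include hstep hsim hsep

lemma le_dist_of_betaDigit_ne (hβ : 0 < β) (hβn : β ≤ n) (hr : 0 ≤ r) {p : ℕ} :
    ∀ {x y : ℝ}, x ∈ Ico (0 : ℝ) 1 → y ∈ Ico (0 : ℝ) 1 →
      (∀ i < p, betaDigit β x i = betaDigit β y i) → betaDigit β x p ≠ betaDigit β y p →
      r ^ p * δ ≤ dist (g x) (g y) := by
  induction p with
  | zero =>
    intro x y hx hy _ hxy
    simpa using hsep x hx y hy hxy
  | succ p ih =>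
    intro x y hx hy hagree hxy
    have hdist : dist (g x) (g y) = r * dist (g (betaT β x)) (g (betaT β y)) := by
      rw [hstep x hx, hstep y hy, ← hagree 0 p.succ_pos,
        hsim _ (betaDigit_lt hβ hβn hx 0)]
    have hT := ih (betaT_mem_Ico β x) (betaT_mem_Ico β y)
      (fun i hi => by simpa only [betaDigit_succ] using hagree (i + 1) (Nat.succ_lt_succ hi))
      (by simpa only [betaDigit_succ] using hxy)
    rw [hdist, pow_succ', mul_assoc]
    exact mul_le_mul_of_nonneg_left hT hr

lemma betaDigit_eq_of_dist_lt (hβ : 0 < β) (hβn : β ≤ n) (hr : 0 ≤ r) {x y : ℝ}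
    (hx : x ∈ Ico (0 : ℝ) 1) (hy : y ∈ Ico (0 : ℝ) 1) {j : ℕ}
    (hxy : ∀ i < j, dist (g x) (g y) < r ^ i * δ) :
    ∀ i < j, betaDigit β x i = betaDigit β y i := by
  induction j with
  | zero => intro i hi; omega
  | succ j ih =>
    have hagree := ih fun i hi => hxy i (by omega)
    intro i hi
    rcases Nat.lt_succ_iff_lt_or_eq.1 hi with hi | rfl
    · exact hagree i hi
    · by_contra hne
      exact (hxy i hi).not_ge
        (le_dist_of_betaDigit_ne hstep hsim hsep hβ hβn hr hx hy hagree hne)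

lemma volume_preimage_le_of_diam_lt (hβ : 0 < β) (hβn : β ≤ n) (hr : 0 ≤ r) {U : Set X}
    (hU : Bornology.IsBounded U) {j : ℕ} (hj : ∀ i < j, Metric.diam U < r ^ i * δ) :
    volume (g ⁻¹' U ∩ Ico 0 1) ≤ ENNReal.ofReal (β⁻¹ ^ j) :=
  volume_le_of_betaDigit_eq hβ inter_subset_right fun _ hx _ hy =>
    betaDigit_eq_of_dist_lt hstep hsim hsep hβ hβn hr hx.2 hy.2 fun i hi =>
      (Metric.dist_le_diam_of_mem hU hx.1 hy.1).trans_lt (hj i hi)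

lemma exists_outerMeasure_le_ediam_rpow (hβ : 0 < β) (hβn : β ≤ n) (hr0 : 0 < r) (hr1 : r < 1)
    (hδ : 0 < δ) {s : ℝ} (hs : 0 < s) (hrs : r ^ s = β⁻¹) {E : Set X}
    (hgE : MapsTo g (Ico 0 1) E) :
    ∃ ν : OuterMeasure X, ν E = ENNReal.ofReal (δ ^ s) ∧ ∀ U, ν U ≤ Metric.ediam U ^ s := by
  refine ⟨ENNReal.ofReal (δ ^ s) •
    OuterMeasure.map g (OuterMeasure.restrict (Ico 0 1) (volume : Measure ℝ).toOuterMeasure),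
    ?_, fun U => ?_⟩
  · have hpre : g ⁻¹' E ∩ Ico 0 1 = Ico 0 1 := inter_eq_right.2 hgE
    simp [hpre]
  by_cases hU : Bornology.IsBounded U
  swap
  · rw [Metric.ediam_of_unbounded hU, ENNReal.top_rpow_of_pos hs]
    exact le_top
  have hvol : volume (g ⁻¹' U ∩ Ico 0 1) ≤ ENNReal.ofReal ((Metric.diam U / δ) ^ s) := by
    refine le_ofReal_div_rpow_of_forall_pow hr0 hr1 Metric.diam_nonneg hδ hs fun j hj => ?_
    rw [← Real.rpow_pow_comm hr0.le, hrs]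
    exact volume_preimage_le_of_diam_lt hstep hsim hsep hβ hβn hr0.le hU hj
  simp only [smul_apply, OuterMeasure.map_apply, OuterMeasure.restrict_apply,
    Measure.coe_toOuterMeasure, smul_eq_mul]
  calc ENNReal.ofReal (δ ^ s) * volume (g ⁻¹' U ∩ Ico 0 1)
      ≤ ENNReal.ofReal (δ ^ s) * ENNReal.ofReal ((Metric.diam U / δ) ^ s) := by gcongr
    _ = Metric.ediam U ^ s := by
      rw [← ENNReal.ofReal_mul (by positivity), ← Real.mul_rpow hδ.le (by positivity),
        mul_div_cancel₀ _ hδ.ne', Metric.ediam_rpow_eq_ofReal hU hs.le]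

end Separated

end Coding

theorem stmt3_general {X : Type*} [MetricSpace X] [CompactSpace X]
    [MeasurableSpace X] [BorelSpace X]
    (n : ℕ) (f : ℕ → X → X) (r : ℝ) (hr0 : 0 < r) (hr1 : r < 1)
    (hsim : ∀ i < n, ∀ x y : X, dist (f i x) (f i y) = r * dist x y)
    (β : ℝ) (hβ1 : 1 < β) (hβn : β < n)
    (φ : (ℕ → ℕ) → X)
    (hφ : ∀ σ ∈ betaShift β, ∀ x : X,
      Filter.Tendsto (fun k => (List.range k).foldr (fun j y => f (σ j) y) x)
        Filter.atTop (nhds (φ σ)))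
    (Eβ : Set X) (hE : Eβ = φ '' betaShift β)
    (δ₀ : ℝ) (hδ₀pos : 0 < δ₀)
    (hδ₀ : IsLeast {d : ℝ | ∃ i < n, ∃ j < n, i ≠ j ∧
      d = setDist ((f i '' Eβ) ∩ Eβ) ((f j '' Eβ) ∩ Eβ)} δ₀)
    (l : ℕ) (hl1 : r ^ (l + 1) * Metric.diam (Set.univ : Set X) < δ₀) :
    (∀ (N : ℕ) (U : Fin N → Set X), (∀ i, Metric.diam (U i) ≤ δ₀) →
        Eβ ⊆ ⋃ i, U i →
        β ^ (-(2 * ((l : ℤ) + 1))) * (β - 1) *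
            Metric.diam (Set.univ : Set X) ^ (Real.log β / (-Real.log r)) ≤
          ∑ i, Metric.diam (U i) ^ (Real.log β / (-Real.log r))) ∧
      0 < μH[Real.log β / (-Real.log r)] Eβ ∧
      ENNReal.ofReal (Real.log β / (-Real.log r)) ≤ dimH Eβ := by
  set s := Real.log β / (-Real.log r)
  have hβ : 0 < β := by linarith
  have hs : 0 < s := div_pos (Real.log_pos hβ1) (neg_pos.2 (Real.log_neg hr0 hr1))
  have hrs : r ^ s = β⁻¹ := rpow_log_div_neg_log hr0 hr1.ne hβ
  have hstep : ∀ x ∈ Ico (0 : ℝ) 1, betaCoding β φ x =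
      f (betaDigit β x 0) (betaCoding β φ (betaT β x)) := fun x hx =>
    betaCoding_eq_apply_betaT hβ hβn.le
      (fun i hi => (LipschitzWith.of_dist_le' fun x y => (hsim i hi x y).le).continuous) hφ hx
  have hgE : MapsTo (betaCoding β φ) (Ico 0 1) Eβ := fun x hx =>
    hE ▸ mem_image_of_mem φ (betaDigit_mem_betaShift hx)
  obtain ⟨ν, hνE, hν⟩ := exists_outerMeasure_le_ediam_rpow hstep hsim
    (fun x hx y hy => le_dist_of_betaDigit_zero_ne hβ hβn.le hstep hgE
      (fun i hi j hj hij => hδ₀.2 ⟨i, hi, j, hj, hij, rfl⟩) hx hy)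
    hβ hβn.le hr0 hr1 hδ₀pos hs hrs hgE
  have hμH : 0 < μH[s] Eβ :=
    (ENNReal.ofReal_pos.2 (Real.rpow_pos_of_pos hδ₀pos s)).trans_le
      (hνE ▸ le_hausdorffMeasure_of_forall_le_ediam_rpow hν Eβ)
  refine ⟨fun N U _ hU => ?_, hμH, ofReal_le_dimH_of_hausdorffMeasure_ne_zero hs.le hμH.ne'⟩
  calc β ^ (-(2 * ((l : ℤ) + 1))) * (β - 1) * Metric.diam (univ : Set X) ^ s
      ≤ β⁻¹ ^ (l + 1) * Metric.diam (univ : Set X) ^ s := by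
        gcongr
        exact zpow_neg_two_mul_sub_one_le hβ1 l
    _ = (r ^ (l + 1) * Metric.diam (univ : Set X)) ^ s := by
        rw [Real.mul_rpow (by positivity) Metric.diam_nonneg, ← Real.rpow_pow_comm hr0.le, hrs]
    _ ≤ δ₀ ^ s := Real.rpow_le_rpow (by positivity) hl1.le hs.le
    _ ≤ ∑ i, Metric.diam (U i) ^ s :=
        le_sum_diam_rpow_of_forall_le_ediam_rpow hs.le hν hνE.ge hU

/-- Lower bound: with the separation condition, `δ_0` the minimal distance between the pieces
`f_i(E_β) ∩ E_β`, and `l` with `r^{l+1}|X| < δ_0 ≤ r^l|X|`, every finite `δ_0`-cover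
`{U_1,…,U_N}` of `E_β` satisfies `Σ |U_i|^s ≥ β^{-2(l+1)}(β-1)|X|^s` with
`s = log β / (-log r)`; in particular `H^s(E_β) > 0` and `dim_H(E_β) ≥ s`. -/
theorem stmt3 {X : Type*} [MetricSpace X] [CompactSpace X] [Nonempty X]
    [MeasurableSpace X] [BorelSpace X]
    (n : ℕ) (f : ℕ → X → X) (r : ℝ) (hr0 : 0 < r) (hr1 : r < 1)
    (hsim : ∀ i < n, ∀ x y : X, dist (f i x) (f i y) = r * dist x y)
    (β : ℝ) (hβ1 : 1 < β) (hβn : β < n)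
    (φ : (ℕ → ℕ) → X)
    (hφ : ∀ σ ∈ betaShift β, ∀ x : X,
      Filter.Tendsto (fun k => (List.range k).foldr (fun j y => f (σ j) y) x)
        Filter.atTop (nhds (φ σ)))
    (Eβ : Set X) (hE : Eβ = φ '' betaShift β)
    (hsep : ∀ i < n, ∀ j < n, i ≠ j → (f i '' Eβ) ∩ (f j '' Eβ) ∩ Eβ = ∅)
    (δ₀ : ℝ) (hδ₀pos : 0 < δ₀)
    (hδ₀ : IsLeast {d : ℝ | ∃ i < n, ∃ j < n, i ≠ j ∧
      d = setDist ((f i '' Eβ) ∩ Eβ) ((f j '' Eβ) ∩ Eβ)} δ₀)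
    (l : ℕ) (hl1 : r ^ (l + 1) * Metric.diam (Set.univ : Set X) < δ₀)
    (hl2 : δ₀ ≤ r ^ l * Metric.diam (Set.univ : Set X)) :
    (∀ (N : ℕ) (U : Fin N → Set X), (∀ i, Metric.diam (U i) ≤ δ₀) →
        Eβ ⊆ ⋃ i, U i →
        β ^ (-(2 * ((l : ℤ) + 1))) * (β - 1) *
            Metric.diam (Set.univ : Set X) ^ (Real.log β / (-Real.log r)) ≤
          ∑ i, Metric.diam (U i) ^ (Real.log β / (-Real.log r))) ∧
      0 < μH[Real.log β / (-Real.log r)] Eβ ∧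
      ENNReal.ofReal (Real.log β / (-Real.log r)) ≤ dimH Eβ :=
  stmt3_general n f r hr0 hr1 hsim β hβ1 hβn φ hφ Eβ hE δ₀ hδ₀pos hδ₀ l hl1
end

section
/- Let α > 2 and for each k ≥ 1 let A_k be the set of α-admissible words (i_1,…,i_k) such that (i_1,…,i_{k−1}, i_k + 1) is also α-admissible, and S_α^k the set of all α-admissible words of length k. Then for every k ≥ 1, |A_k| / |S_α^k| ≥ (⌊α⌋ − 1)/⌊α⌋. -/
open Set Filter MeasureTheory Topology

/-- `S_α^k`: the set of α-admissible words of length `k`. -/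
def betaWord (β : ℝ) (k : ℕ) : Set (Fin k → ℕ) :=
  {w | ∃ x ∈ Set.Ico (0 : ℝ) 1, ∀ i : Fin k, w i = betaDigit β x i}

/-- `A_k`: the α-admissible words `(i_1,…,i_k)` such that `(i_1,…,i_{k-1}, i_k + 1)` is also
α-admissible. -/
def betaWordInc (α : ℝ) (k : ℕ) : Set (Fin k → ℕ) :=
  {w | w ∈ betaWord α k ∧
    (fun i : Fin k => if (i : ℕ) = k - 1 then w i + 1 else w i) ∈ betaWord α k}

/-!
Moving a point of the cylinder of an admissible word `w` of length `k` to the left by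
`δ / α ^ k` keeps its first `k` digits and lowers its image under `T^k` by `δ`; so `T^k` maps
the cylinder onto an interval with left end `0`. Hence the admissible extensions `w d` are
`d = 0, …, m`, and every `w d` with `d < m` is *full*: its cylinder is mapped onto `[0, 1)`, so
`w d` has all the extensions `d' < α`.

The words of `S_{k+1} \ A_{k+1}` are the maximal extensions, one per word of `S_k`, so
`|S_{k+1} \ A_{k+1}| ≤ |S_k|`. The words of `A_k` are full, so for `α ∉ ℕ` each has `⌊α⌋ + 1`
extensions, and induction with the previous bound gives `⌊α⌋ |S_k| ≤ |S_{k+1}|` (for `α ∈ ℕ`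
every word is full). Together, `⌊α⌋ |S_{k+1} \ A_{k+1}| ≤ |S_{k+1}|`.
-/

namespace BetaExpansion

variable {α : ℝ} {k : ℕ}

def cylinder (α : ℝ) {k : ℕ} (w : Fin k → ℕ) : Set ℝ :=
  {x | x ∈ Ico (0 : ℝ) 1 ∧ ∀ i, w i = betaDigit α x i}

def IsFull (α : ℝ) {k : ℕ} (w : Fin k → ℕ) : Prop :=
  Ico (0 : ℝ) 1 ⊆ (betaT α)^[k] '' cylinder α w

theorem betaWord_nonempty (α : ℝ) (k : ℕ) : (betaWord α k).Nonempty :=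
  ⟨_, 0, ⟨le_rfl, one_pos⟩, fun _ => rfl⟩

theorem betaT_mem_Ico (α x : ℝ) : betaT α x ∈ Ico (0 : ℝ) 1 :=
  ⟨Int.fract_nonneg _, Int.fract_lt_one _⟩

theorem iterate_betaT_mem_Ico {x : ℝ} (hx : x ∈ Ico (0 : ℝ) 1) :
    ∀ n, (betaT α)^[n] x ∈ Ico (0 : ℝ) 1
  | 0 => hx
  | n + 1 => by rw [Function.iterate_succ_apply']; exact betaT_mem_Ico _ _

theorem betaT_le_mul (hα : 0 ≤ α) {x : ℝ} (hx : 0 ≤ x) : betaT α x ≤ α * x :=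
  sub_le_self _ (mod_cast Int.floor_nonneg.2 (mul_nonneg hα hx))

theorem iterate_betaT_le_pow_mul (hα : 0 ≤ α) {x : ℝ} (hx : 0 ≤ x) (n : ℕ) :
    (betaT α)^[n] x ≤ α ^ n * x := by
  induction n generalizing x with
  | zero => simp
  | succ n ih =>
    rw [Function.iterate_succ_apply, pow_succ, mul_assoc]
    exact (ih (betaT_mem_Ico α x).1).trans
      (mul_le_mul_of_nonneg_left (betaT_le_mul hα hx) (pow_nonneg hα n))

theorem betaDigit_succ (α x : ℝ) (n : ℕ) :
    betaDigit α x (n + 1) = betaDigit α (betaT α x) n := by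
  rw [betaDigit, betaDigit, Function.iterate_succ_apply]

theorem betaT_sub_div (hα : 0 < α) {x ε : ℝ} (hx : x ∈ Ico (0 : ℝ) 1) (hε : 0 ≤ ε)
    (hεT : ε ≤ betaT α x) :
    x - ε / α ∈ Ico (0 : ℝ) 1 ∧ betaDigit α (x - ε / α) 0 = betaDigit α x 0 ∧
      betaT α (x - ε / α) = betaT α x - ε := by
  have hmul : α * (x - ε / α) = α * x - ε := by field_simp
  have hfloor : ⌊α * x - ε⌋ = ⌊α * x⌋ := by
    have := Int.floor_add_fract (α * x)
    have := Int.fract_lt_one (α * x)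
    rw [Int.floor_eq_iff]
    constructor <;> linarith [show ε ≤ Int.fract (α * x) from hεT]
  refine ⟨⟨?_, ?_⟩, ?_, ?_⟩
  · rw [sub_nonneg, div_le_iff₀ hα]
    linarith [betaT_le_mul hα.le hx.1]
  · linarith [hx.2, div_nonneg hε hα.le]
  · show ⌊α * (x - ε / α)⌋₊ = ⌊α * x⌋₊
    rw [hmul, ← Int.floor_toNat, ← Int.floor_toNat, hfloor]
  · rw [betaT, betaT, hmul, ← Int.self_sub_floor, ← Int.self_sub_floor, hfloor]
    ring

theorem sub_div_pow_mem_Ico_and_betaDigit_eq (hα : 0 < α) (k : ℕ) {x δ : ℝ}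
    (hx : x ∈ Ico (0 : ℝ) 1) (hδ : 0 ≤ δ) (hδT : δ ≤ (betaT α)^[k] x) :
    x - δ / α ^ k ∈ Ico (0 : ℝ) 1 ∧
      (∀ j < k, betaDigit α (x - δ / α ^ k) j = betaDigit α x j) ∧
      (betaT α)^[k] (x - δ / α ^ k) = (betaT α)^[k] x - δ := by
  induction k generalizing x with
  | zero =>
    simp only [pow_zero, div_one, Function.iterate_zero_apply] at hδT ⊢
    exact ⟨⟨by linarith, by linarith [hx.2]⟩, fun j hj => absurd hj j.not_lt_zero, trivial⟩
  | succ k ih =>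
    rw [Function.iterate_succ_apply] at hδT
    have hεT : δ / α ^ k ≤ betaT α x := by
      rw [div_le_iff₀ (pow_pos hα k), mul_comm]
      exact hδT.trans (iterate_betaT_le_pow_mul hα.le (betaT_mem_Ico α x).1 k)
    obtain ⟨hmem, hdigit, hT⟩ := betaT_sub_div hα hx (by positivity) hεT
    obtain ⟨-, hdigits, hTk⟩ := ih (betaT_mem_Ico α x) hδT
    rw [pow_succ, ← div_div]
    refine ⟨hmem, ?_, ?_⟩
    · rintro (_ | j) hj
      · exact hdigit
      · rw [betaDigit_succ, betaDigit_succ, hT]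
        exact hdigits j (Nat.succ_lt_succ_iff.1 hj)
    · rw [Function.iterate_succ_apply, Function.iterate_succ_apply, hT, hTk]

theorem image_cylinder_subset_Ico (w : Fin k → ℕ) :
    (betaT α)^[k] '' cylinder α w ⊆ Ico (0 : ℝ) 1 := by
  rintro _ ⟨x, hx, rfl⟩
  exact iterate_betaT_mem_Ico hx.1 k

theorem mem_image_cylinder_of_le (hα : 0 < α) {w : Fin k → ℕ} {y y' : ℝ}
    (hy : y ∈ (betaT α)^[k] '' cylinder α w) (hy' : 0 ≤ y') (hyy' : y' ≤ y) :
    y' ∈ (betaT α)^[k] '' cylinder α w := by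
  obtain ⟨x, ⟨hx, hw⟩, rfl⟩ := hy
  obtain ⟨hmem, hdigits, hT⟩ :=
    sub_div_pow_mem_Ico_and_betaDigit_eq hα k hx (sub_nonneg.2 hyy') (sub_le_self _ hy')
  exact ⟨_, ⟨hmem, fun i => (hw i).trans (hdigits i i.isLt).symm⟩, by rw [hT]; ring⟩

theorem mem_cylinder_snoc {w : Fin k → ℕ} {d : ℕ} {x : ℝ} :
    x ∈ cylinder α (Fin.snoc w d) ↔ x ∈ cylinder α w ∧ d = betaDigit α x k := by
  simp only [cylinder, mem_ofPred_eq, Fin.forall_fin_succ', Fin.snoc_castSucc, Fin.snoc_last,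
    Fin.val_castSucc, Fin.val_last, and_assoc]

theorem snoc_mem_betaWord_iff {w : Fin k → ℕ} {d : ℕ} :
    Fin.snoc w d ∈ betaWord α (k + 1) ↔ ∃ y ∈ (betaT α)^[k] '' cylinder α w, ⌊α * y⌋₊ = d := by
  constructor
  · rintro ⟨x, hx⟩
    exact ⟨_, ⟨x, (mem_cylinder_snoc.1 hx).1, rfl⟩, (mem_cylinder_snoc.1 hx).2.symm⟩
  · rintro ⟨_, ⟨x, hx, rfl⟩, rfl⟩
    exact ⟨x, mem_cylinder_snoc.2 ⟨hx, rfl⟩⟩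

theorem snoc_mem_betaWord_of_div_mem (hα : 0 < α) {w : Fin k → ℕ} {d : ℕ}
    (h : (d / α : ℝ) ∈ (betaT α)^[k] '' cylinder α w) : Fin.snoc w d ∈ betaWord α (k + 1) :=
  snoc_mem_betaWord_iff.2 ⟨_, h, by rw [mul_div_cancel₀ _ hα.ne', Nat.floor_natCast]⟩

theorem mem_image_cylinder_snoc (hα : 0 < α) {w : Fin k → ℕ} {d : ℕ} {y : ℝ}
    (hy : y ∈ Ico (0 : ℝ) 1) (h : (d + y) / α ∈ (betaT α)^[k] '' cylinder α w) :
    y ∈ (betaT α)^[k + 1] '' cylinder α (Fin.snoc w d) := by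
  obtain ⟨x, hx, hxy⟩ := h
  have hmul : α * ((d + y) / α) = d + y := mul_div_cancel₀ _ hα.ne'
  refine ⟨x, mem_cylinder_snoc.2 ⟨hx, ?_⟩, ?_⟩
  · show d = ⌊α * (betaT α)^[k] x⌋₊
    rw [hxy, hmul, add_comm, Nat.floor_add_natCast hy.1, Nat.floor_eq_zero.2 hy.2, zero_add]
  · rw [Function.iterate_succ_apply', hxy, betaT, hmul, Int.fract_natCast_add,
      Int.fract_eq_self.2 hy]

theorem snoc_mem_betaWord_of_le (hα : 0 < α) {w : Fin k → ℕ} {d d' : ℕ}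
    (h : Fin.snoc w d' ∈ betaWord α (k + 1)) (hdd' : d ≤ d') :
    Fin.snoc w d ∈ betaWord α (k + 1) := by
  obtain ⟨y, hy, rfl⟩ := snoc_mem_betaWord_iff.1 h
  refine snoc_mem_betaWord_of_div_mem hα (mem_image_cylinder_of_le hα hy (by positivity) ?_)
  rw [div_le_iff₀ hα, mul_comm]
  exact (Nat.cast_le.2 hdd').trans
    (Nat.floor_le (mul_nonneg hα.le (image_cylinder_subset_Ico w hy).1))

theorem isFull_of_fin_zero (w : Fin 0 → ℕ) : IsFull α w :=
  fun y hy => ⟨y, ⟨hy, fun i => i.elim0⟩, rfl⟩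

theorem IsFull.snoc_mem (hα : 0 < α) {w : Fin k → ℕ} (hw : IsFull α w) {d : ℕ}
    (hd : (d : ℝ) < α) : Fin.snoc w d ∈ betaWord α (k + 1) :=
  snoc_mem_betaWord_of_div_mem hα (hw ⟨by positivity, (div_lt_one hα).2 hd⟩)

theorem IsFull.snoc (hα : 0 < α) {w : Fin k → ℕ} (hw : IsFull α w) {d : ℕ}
    (hd : (d : ℝ) + 1 ≤ α) : IsFull α (Fin.snoc w d) := fun y hy =>
  mem_image_cylinder_snoc hα hy
    (hw ⟨div_nonneg (by linarith [hy.1]) hα.le, (div_lt_one hα).2 (by linarith [hy.2])⟩)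

theorem isFull_snoc_of_snoc_succ_mem (hα : 0 < α) {w : Fin k → ℕ} {d : ℕ}
    (h : Fin.snoc w (d + 1) ∈ betaWord α (k + 1)) : IsFull α (Fin.snoc w d) := by
  obtain ⟨y', hy', hd⟩ := snoc_mem_betaWord_iff.1 h
  have hdy' : (d : ℝ) + 1 ≤ α * y' := by
    rw [← Nat.cast_add_one, ← hd]
    exact Nat.floor_le (mul_nonneg hα.le (image_cylinder_subset_Ico w hy').1)
  intro y hy
  refine mem_image_cylinder_snoc hα hy (mem_image_cylinder_of_le hα hy'
    (div_nonneg (by linarith [hy.1]) hα.le) ?_)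
  rw [div_le_iff₀ hα, mul_comm]
  linarith [hy.2]

theorem init_mem_betaWord {w : Fin (k + 1) → ℕ} (h : w ∈ betaWord α (k + 1)) :
    Fin.init w ∈ betaWord α k := by
  obtain ⟨x, hx, hw⟩ := h
  exact ⟨x, hx, fun i => hw i.castSucc⟩

theorem exists_snoc_mem_betaWord {w : Fin k → ℕ} (h : w ∈ betaWord α k) :
    ∃ d, Fin.snoc w d ∈ betaWord α (k + 1) := by
  obtain ⟨x, hx⟩ := h
  exact ⟨betaDigit α x k, x, mem_cylinder_snoc.2 ⟨hx, rfl⟩⟩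

theorem lt_of_mem_betaWord (hα : 0 < α) {w : Fin k → ℕ} (h : w ∈ betaWord α k) (i : Fin k) :
    (w i : ℝ) < α := by
  obtain ⟨x, hx, hw⟩ := h
  have hT := iterate_betaT_mem_Ico (α := α) hx i
  rw [hw i]
  exact (Nat.floor_le (mul_nonneg hα.le hT.1)).trans_lt (mul_lt_of_lt_one_right hα hT.2)

theorem betaWord_finite (hα : 0 < α) (k : ℕ) : (betaWord α k).Finite :=
  (Set.finite_Iic (fun _ : Fin k => ⌊α⌋₊)).subset fun _ hw i =>
    Nat.le_floor (lt_of_mem_betaWord hα hw i).le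

theorem isFull_of_mem_betaWord_of_floor_eq (hα : 0 < α) (hint : (⌊α⌋₊ : ℝ) = α) :
    ∀ {k} {w : Fin k → ℕ}, w ∈ betaWord α k → IsFull α w
  | 0, _, _ => isFull_of_fin_zero _
  | k + 1, w, hw => by
    rw [← Fin.snoc_init_self w]
    refine (isFull_of_mem_betaWord_of_floor_eq hα hint (init_mem_betaWord hw)).snoc hα ?_
    have hlast := lt_of_mem_betaWord hα hw (Fin.last k)
    rw [← hint] at hlast ⊢
    exact_mod_cast Nat.cast_lt.1 hlast

theorem betaWordInc_zero (α : ℝ) : betaWordInc α 0 = betaWord α 0 :=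
  Set.sep_eq_self_iff_mem_true.2 fun _ hw => by convert hw

theorem mem_betaWordInc_succ_iff {w : Fin (k + 1) → ℕ} :
    w ∈ betaWordInc α (k + 1) ↔ w ∈ betaWord α (k + 1) ∧
      Fin.snoc (Fin.init w) (w (Fin.last k) + 1) ∈ betaWord α (k + 1) := by
  have hbump : (fun i : Fin (k + 1) => if (i : ℕ) = k + 1 - 1 then w i + 1 else w i) =
      Fin.snoc (Fin.init w) (w (Fin.last k) + 1) := by
    funext i
    induction i using Fin.lastCases with
    | last => simp
    | cast j => simp [j.isLt.ne, Fin.init]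
  rw [betaWordInc, mem_ofPred_eq, hbump]

theorem isFull_of_mem_betaWordInc (hα : 0 < α) {w : Fin (k + 1) → ℕ}
    (h : w ∈ betaWordInc α (k + 1)) : IsFull α w := by
  simpa only [Fin.snoc_init_self] using
    isFull_snoc_of_snoc_succ_mem hα (mem_betaWordInc_succ_iff.1 h).2

theorem mul_ncard_add_ncard_diff_le (hα : 0 < α) {c : ℕ} {A : Set (Fin k → ℕ)}
    (hc : ∀ w ∈ A, ∀ d < c, Fin.snoc w d ∈ betaWord α (k + 1)) :
    c * A.ncard + (betaWord α k \ A).ncard ≤ (betaWord α (k + 1)).ncard := by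
  have hfin := betaWord_finite hα (k + 1)
  set E : Set (Fin (k + 1) → ℕ) := Function.uncurry Fin.snoc '' A ×ˢ Iio c
  set F := {v ∈ betaWord α (k + 1) | Fin.init v ∉ A}
  have hE : E ⊆ betaWord α (k + 1) := by
    rintro _ ⟨⟨w, d⟩, ⟨hw, hd⟩, rfl⟩
    exact hc w hw d hd
  have hF : F ⊆ betaWord α (k + 1) := sep_subset _ _
  have hEF : Disjoint E F := by
    rw [Set.disjoint_left]
    rintro _ ⟨⟨w, d⟩, ⟨hw, -⟩, rfl⟩ ⟨-, hv⟩
    exact hv (by rwa [Function.uncurry_apply_pair, Fin.init_snoc])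
  have hEcard : E.ncard = c * A.ncard := by
    rw [ncard_image_of_injective _ Fin.snoc_injective2.uncurry, ncard_prod, ncard_Iio_nat,
      mul_comm]
  have hFcard : (betaWord α k \ A).ncard ≤ F.ncard := by
    have hinit : betaWord α k \ A ⊆ Fin.init '' F := by
      rintro w ⟨hw, hwA⟩
      obtain ⟨d, hd⟩ := exists_snoc_mem_betaWord hw
      exact ⟨_, ⟨hd, by rwa [Fin.init_snoc]⟩, Fin.init_snoc _ _⟩
    exact (ncard_le_ncard hinit ((hfin.subset hF).image _)).trans
      (ncard_image_le (hfin.subset hF))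
  calc c * A.ncard + (betaWord α k \ A).ncard ≤ E.ncard + F.ncard := by omega
    _ = (E ∪ F).ncard := (ncard_union_eq hEF (hfin.subset hE) (hfin.subset hF)).symm
    _ ≤ _ := ncard_le_ncard (union_subset hE hF) hfin

theorem ncard_betaWord_diff_betaWordInc_le (hα : 0 < α) (k : ℕ) :
    (betaWord α (k + 1) \ betaWordInc α (k + 1)).ncard ≤ (betaWord α k).ncard := by
  refine ncard_le_ncard_of_injOn Fin.init (fun v hv => init_mem_betaWord hv.1) ?_
    (betaWord_finite hα k)
  have hmax : ∀ u ∈ betaWord α (k + 1) \ betaWordInc α (k + 1), ∀ v ∈ betaWord α (k + 1),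
      Fin.init u = Fin.init v → v (Fin.last k) ≤ u (Fin.last k) := by
    rintro u ⟨hu, huA⟩ v hv huv
    by_contra! hlt
    refine huA (mem_betaWordInc_succ_iff.2 ⟨hu, snoc_mem_betaWord_of_le hα ?_ hlt⟩)
    rwa [huv, Fin.snoc_init_self]
  intro u hu v hv huv
  rw [← Fin.snoc_init_self u, ← Fin.snoc_init_self v, huv,
    (hmax u hu v hv.1 huv).antisymm (hmax v hv u hu.1 huv.symm)]

theorem ncard_betaWordInc_add_ncard_diff (hα : 0 < α) (k : ℕ) :
    (betaWordInc α k).ncard + (betaWord α k \ betaWordInc α k).ncard =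
      (betaWord α k).ncard := by
  rw [add_comm]
  exact ncard_sdiff_add_ncard_of_subset (fun _ hw => hw.1) (betaWord_finite hα k)

theorem floor_mul_ncard_betaWord_le_of_forall_isFull (hα : 0 < α)
    (h : ∀ w ∈ betaWord α k, IsFull α w) :
    ⌊α⌋₊ * (betaWord α k).ncard ≤ (betaWord α (k + 1)).ncard :=
  (Nat.le_add_right _ _).trans <| mul_ncard_add_ncard_diff_le hα fun w hw _ hd =>
    (h w hw).snoc_mem hα ((Nat.cast_lt.2 hd).trans_le (Nat.floor_le hα.le))

theorem floor_mul_ncard_betaWord_succ_le_add (hα : 0 < α)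
    (h : ⌊α⌋₊ * (betaWord α k).ncard ≤ (betaWord α (k + 1)).ncard) :
    ⌊α⌋₊ * (betaWord α (k + 1)).ncard ≤
      ⌊α⌋₊ * (betaWordInc α (k + 1)).ncard + (betaWord α (k + 1)).ncard := by
  have hsplit := ncard_betaWordInc_add_ncard_diff hα (k + 1)
  have hdiff := Nat.mul_le_mul_left ⌊α⌋₊ (ncard_betaWord_diff_betaWordInc_le hα k)
  rw [← hsplit, mul_add]
  linarith

theorem floor_mul_ncard_betaWord_le (hα : 0 < α) (k : ℕ) :
    ⌊α⌋₊ * (betaWord α k).ncard ≤ (betaWord α (k + 1)).ncard := by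
  rcases (Nat.floor_le hα.le).eq_or_lt with hint | hlt
  · exact floor_mul_ncard_betaWord_le_of_forall_isFull hα fun _ =>
      isFull_of_mem_betaWord_of_floor_eq hα hint
  induction k with
  | zero =>
    exact floor_mul_ncard_betaWord_le_of_forall_isFull hα fun w _ => isFull_of_fin_zero w
  | succ k ih =>
    have hext := mul_ncard_add_ncard_diff_le hα (c := ⌊α⌋₊ + 1) (A := betaWordInc α (k + 1))
      fun w hw d hd => (isFull_of_mem_betaWordInc hα hw).snoc_mem hα
        ((Nat.cast_le.2 (Nat.lt_succ_iff.1 hd)).trans_lt hlt)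
    have hstep := floor_mul_ncard_betaWord_succ_le_add hα ih
    have hsplit := ncard_betaWordInc_add_ncard_diff hα (k + 1)
    linarith

theorem floor_mul_ncard_betaWord_le_add (hα : 0 < α) :
    ∀ k, ⌊α⌋₊ * (betaWord α k).ncard ≤ ⌊α⌋₊ * (betaWordInc α k).ncard + (betaWord α k).ncard
  | 0 => by rw [betaWordInc_zero]; exact Nat.le_add_right _ _
  | k + 1 => floor_mul_ncard_betaWord_succ_le_add hα (floor_mul_ncard_betaWord_le hα k)

end BetaExpansion

open BetaExpansion

theorem stmt8_general (α : ℝ) (hα : 2 < α) (k : ℕ) :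
    ((⌊α⌋₊ : ℝ) - 1) / (⌊α⌋₊ : ℝ) ≤
      ((betaWordInc α k).ncard : ℝ) / ((betaWord α k).ncard : ℝ) := by
  have hα0 : 0 < α := by linarith
  have hN : (0 : ℝ) < ⌊α⌋₊ := Nat.cast_pos.2 (Nat.floor_pos.2 (by linarith))
  have hS : (0 : ℝ) < (betaWord α k).ncard :=
    Nat.cast_pos.2 ((ncard_pos (betaWord_finite hα0 k)).2 (betaWord_nonempty α k))
  have hkey : (⌊α⌋₊ : ℝ) * (betaWord α k).ncard ≤
      ⌊α⌋₊ * (betaWordInc α k).ncard + (betaWord α k).ncard := by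
    exact_mod_cast floor_mul_ncard_betaWord_le_add hα0 k
  rw [div_le_div_iff₀ hN hS]
  linarith

/-- For `α > 2` and every `k ≥ 1`, `|A_k| / |S_α^k| ≥ (⌊α⌋ - 1)/⌊α⌋`. -/
theorem stmt8 (α : ℝ) (hα : 2 < α) (k : ℕ) (hk : 1 ≤ k) :
    ((⌊α⌋₊ : ℝ) - 1) / (⌊α⌋₊ : ℝ) ≤
      ((betaWordInc α k).ncard : ℝ) / ((betaWord α k).ncard : ℝ) :=
  stmt8_general α hα k
end
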